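/- For every integer n ≥ 2, the number of cyclic permutations of length n avoiding all three cyclic patterns [1324], [1342], and [1423] equals n−1; that is, #Av_n([1324],[1342],[1423]) = n−1. -/

import Mathlib

/-- A sequence `σ` of length `n` (with distinct values) contains the pattern `π`
of length `k` if some subsequence of `σ` is order isomorphic to `π`. -/
def ContainsPat {n k : ℕ} (σ : Fin n → Fin n) (π : Fin k → ℕ) : Prop :=
  ∃ f : Fin k → Fin n, StrictMono f ∧ ∀ i j : Fin k, π i < π j ↔ σ (f i) < σ (f j)

/-- The rotation of the sequence `σ` starting at position `r`. -/
def rotSeq {n : ℕ} (σ : Fin n → Fin n) (r : Fin n) : Fin n → Fin n :=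
  fun i => σ (i + r)

/-- The cyclic permutation `[σ]` contains the cyclic pattern `[π]` if some
rotation of `σ` contains `π` linearly. -/
def CycContains {n k : ℕ} (σ : Fin n → Fin n) (π : Fin k → ℕ) : Prop :=
  ∃ r : Fin n, ContainsPat (rotSeq σ r) π

/-- The cyclic permutation `[σ]` avoids the cyclic pattern `[π]`. -/
def CycAvoids {n k : ℕ} (σ : Fin n → Fin n) (π : Fin k → ℕ) : Prop :=
  ¬ CycContains σ π

/-- The cyclic permutation `[σ]`, i.e. the set of all rotations of `σ`. -/
def CycClass {n : ℕ} (σ : Fin n → Fin n) : Set (Fin n → Fin n) :=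
  Set.range (rotSeq σ)

/-- The set of cyclic permutations (rotation classes) of length `n` all of whose
representatives are permutations and which satisfy the (rotation-invariant)
predicate `P`. -/
def AvClasses (n : ℕ) (P : (Fin n → Fin n) → Prop) : Set (Set (Fin n → Fin n)) :=
  { C | ∃ σ : Equiv.Perm (Fin n), C = CycClass ⇑σ ∧ P ⇑σ }

/-- The cyclic descent number: the number of indices `i` (mod `n`) with
`σ i > σ (i+1)`. -/
def cdes {n : ℕ} (σ : Fin n → Fin n) : ℕ :=
  (Finset.univ.filter fun i : Fin n =>
    σ ⟨(↑i + 1) % n, Nat.mod_lt _ i.pos⟩ < σ i).card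

/-- The cyclic peak number: the number of indices `i` (mod `n`) with
`σ (i-1) < σ i > σ (i+1)`. -/
def cpk {n : ℕ} (σ : Fin n → Fin n) : ℕ :=
  (Finset.univ.filter fun i : Fin n =>
    σ ⟨(↑i + (n - 1)) % n, Nat.mod_lt _ i.pos⟩ < σ i ∧
    σ ⟨(↑i + 1) % n, Nat.mod_lt _ i.pos⟩ < σ i).card

/-!
All three patterns begin with their smallest entry, so a cyclic occurrence can be read starting
from it: `[σ]` avoids them iff no entry is followed, cyclically, by three larger entries in the
relative order `213`, `231` or `312`. Reading `σ` from its minimum `0`, excluding `213` and `312`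
leaves no valley, so the remaining entries rise to the maximum and then fall, and excluding `231`
puts every entry before the maximum below every entry after it. Hence `[σ]` is the class of
`0, 1, …, k-1, n-1, n-2, …, k` for a unique `1 ≤ k ≤ n-1`, and each of these classes avoids
the patterns.
-/

open Function

section Patterns

variable {α : Type*} [LinearOrder α] {n : ℕ}

/-- The patterns `213`, `231`, `312`: `1324`, `1342`, `1423` without their leading `1`. -/
def IsBadTriple (a b c : α) : Prop :=
  (b < a ∧ a < c) ∨ (c < a ∧ a < b) ∨ (b < c ∧ c < a)

def HasBadQuad (τ : Fin n → α) : Prop :=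
  ∃ a p q t : Fin n, a < p ∧ p < q ∧ q < t ∧ τ a < τ p ∧ τ a < τ q ∧ τ a < τ t ∧
    IsBadTriple (τ p) (τ q) (τ t)

end Patterns

theorem containsPat_iff_hasBadQuad {n : ℕ} (τ : Fin n → Fin n) :
    (ContainsPat τ ![1,3,2,4] ∨ ContainsPat τ ![1,3,4,2] ∨ ContainsPat τ ![1,4,2,3]) ↔
      HasBadQuad τ := by
  constructor
  · rintro (⟨f, hf, hπ⟩ | ⟨f, hf, hπ⟩ | ⟨f, hf, hπ⟩) <;>
      refine ⟨f 0, f 1, f 2, f 3, hf (by decide), hf (by decide), hf (by decide),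
        (hπ 0 1).1 (by decide), (hπ 0 2).1 (by decide), (hπ 0 3).1 (by decide), ?_⟩
    · exact Or.inl ⟨(hπ 2 1).1 (by decide), (hπ 1 3).1 (by decide)⟩
    · exact Or.inr <| Or.inl ⟨(hπ 3 1).1 (by decide), (hπ 1 2).1 (by decide)⟩
    · exact Or.inr <| Or.inr ⟨(hπ 2 3).1 (by decide), (hπ 3 1).1 (by decide)⟩
  · rintro ⟨a, p, q, t, hap, hpq, hqt, ha₁, ha₂, ha₃, hbad⟩
    have hf : StrictMono ![a, p, q, t] := by
      rw [Fin.strictMono_iff_lt_succ]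
      intro i
      fin_cases i <;> assumption
    rcases hbad with ⟨h₁, h₂⟩ | ⟨h₁, h₂⟩ | ⟨h₁, h₂⟩ <;>
    [refine .inl ⟨_, hf, fun i j => ?_⟩;
     refine .inr <| .inl ⟨_, hf, fun i j => ?_⟩;
     refine .inr <| .inr ⟨_, hf, fun i j => ?_⟩] <;>
      fin_cases i <;> fin_cases j <;>
        simp only [Fin.reduceFinMk, Matrix.cons_val, Nat.reduceLT, lt_self_iff_false, false_iff,
          true_iff, not_lt] <;>
        order

theorem cycAvoids_iff_forall_not_hasBadQuad {n : ℕ} (σ : Fin n → Fin n) :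
    (CycAvoids σ ![1,3,2,4] ∧ CycAvoids σ ![1,3,4,2] ∧ CycAvoids σ ![1,4,2,3]) ↔
      ∀ r, ¬ HasBadQuad (rotSeq σ r) := by
  simp only [CycAvoids, CycContains, ← containsPat_iff_hasBadQuad, not_exists, not_or, forall_and]

theorem eq_of_forall_lt_iff_lt {ι α : Type*} [LinearOrder α] [Finite α] {σ τ : ι → α}
    (hσ : Bijective σ) (h : ∀ i j, σ i < σ j ↔ τ i < τ j) : σ = τ := by
  let e := Equiv.ofBijective σ hσ
  have hmono : StrictMono (τ ∘ e.symm) := fun a b hab =>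
    (h _ _).1 (by simpa only [e, Equiv.ofBijective_apply_symm_apply] using hab)
  funext i
  simpa [e] using (congrFun hmono.eq_id (σ i)).symm

section RisesThenFalls

variable {α : Type*} [LinearOrder α] {n : ℕ}

def RisesThenFalls (τ : Fin n → α) (k : ℕ) : Prop :=
  ∀ i j : Fin n, i < j → if (i : ℕ) < k then τ i < τ j else τ j < τ i

theorem RisesThenFalls.injective {τ : Fin n → α} {k : ℕ} (h : RisesThenFalls τ k) :
    Injective τ := by
  intro i j hij
  by_contra hne
  rcases lt_or_gt_of_ne hne with hlt | hlt <;>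
  · have := h _ _ hlt
    split_ifs at this <;> simp_all

theorem RisesThenFalls.lt_iff_lt {σ τ : Fin n → α} {k : ℕ} (hσ : RisesThenFalls σ k)
    (hτ : RisesThenFalls τ k) (i j : Fin n) : σ i < σ j ↔ τ i < τ j := by
  rcases lt_trichotomy i j with hij | rfl | hij
  · have h₁ := hσ i j hij
    have h₂ := hτ i j hij
    split_ifs at h₁ h₂ <;> simp only [h₁, h₂, h₁.not_gt, h₂.not_gt]
  · simp only [lt_irrefl]
  · have h₁ := hσ j i hij
    have h₂ := hτ j i hij
    split_ifs at h₁ h₂ <;> simp only [h₁, h₂, h₁.not_gt, h₂.not_gt]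

theorem RisesThenFalls.index_le {τ : Fin n → α} {a b : ℕ} (ha : RisesThenFalls τ a)
    (hb : RisesThenFalls τ b) (han : a < n) : a ≤ b := by
  by_contra! hba
  have h₁ := ha ⟨b, by omega⟩ ⟨b + 1, by omega⟩ (Fin.mk_lt_mk.2 b.lt_succ_self)
  have h₂ := hb ⟨b, by omega⟩ ⟨b + 1, by omega⟩ (Fin.mk_lt_mk.2 b.lt_succ_self)
  simp only [hba, b.lt_irrefl, if_true, if_false] at h₁ h₂
  exact h₁.asymm h₂

theorem RisesThenFalls.eq {σ τ : Fin n → Fin n} {k : ℕ} (hσ : RisesThenFalls σ k)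
    (hτ : RisesThenFalls τ k) : σ = τ :=
  eq_of_forall_lt_iff_lt (Finite.injective_iff_bijective.1 hσ.injective) (hσ.lt_iff_lt hτ)

end RisesThenFalls

theorem risesThenFalls_of_not_hasBadQuad {α : Type*} [LinearOrder α] {n : ℕ} [NeZero n]
    {τ : Fin n → α} (hτ : Injective τ) (hmin : ∀ i, τ 0 ≤ τ i) {M : Fin n}
    (hmax : ∀ i, τ i ≤ τ M) (hbad : ¬ HasBadQuad τ) : RisesThenFalls τ M := by
  have hpos : ∀ {i}, 0 < i → τ 0 < τ i := fun hi => (hmin _).lt_of_ne (hτ.ne hi.ne)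
  have no_valley : ∀ {p q t}, p < q → q < t → τ q < τ p → τ q < τ t → False := by
    intro p q t hpq hqt hqp hqt'
    rcases (Fin.zero_le p).eq_or_lt with rfl | hp
    · exact (hmin q).not_gt hqp
    refine hbad ⟨0, p, q, t, hp, hpq, hqt, hpos hp, hpos (hp.trans hpq),
      hpos (hp.trans (hpq.trans hqt)), ?_⟩
    rcases lt_or_gt_of_ne (hτ.ne (hpq.trans hqt).ne) with hpt | hpt
    exacts [.inl ⟨hqp, hpt⟩, .inr <| .inr ⟨hqt', hpt⟩]
  have no_231 : ∀ {p q t}, 0 < p → p < q → q < t → τ t < τ p → τ p < τ q → False :=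
    fun hp hpq hqt htp hpq' => hbad ⟨0, _, _, _, hp, hpq, hqt, hpos hp,
      hpos (hp.trans hpq), hpos (hp.trans (hpq.trans hqt)), .inr <| .inl ⟨htp, hpq'⟩⟩
  intro i j hij
  split_ifs with hiM
  · rw [← Fin.lt_def] at hiM
    by_contra! hji
    replace hji := hji.lt_of_ne (hτ.ne hij.ne')
    rcases lt_trichotomy j M with hjM | rfl | hMj
    · exact no_valley hij hjM hji ((hmax j).lt_of_ne (hτ.ne hjM.ne))
    · exact (hmax i).not_gt hji
    · rcases (Fin.zero_le i).eq_or_lt with rfl | hi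
      · exact (hmin j).not_gt hji
      · exact no_231 hi hiM hMj hji ((hmax i).lt_of_ne (hτ.ne hiM.ne))
  · rw [← Fin.lt_def, not_lt] at hiM
    by_contra! hij'
    replace hij' := hij'.lt_of_ne (hτ.ne hij.ne)
    rcases hiM.eq_or_lt with rfl | hMi
    · exact (hmax j).not_gt hij'
    · exact no_valley hMi hij ((hmax i).lt_of_ne (hτ.ne hMi.ne')) hij'

/-- The sequence `0, 1, …, k-1, n-1, n-2, …, k`. -/
def stdPerm (n k : ℕ) : Fin n → Fin n :=
  fun i => if h : (i : ℕ) < k then i else ⟨n - 1 + k - i, by omega⟩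

theorem stdPerm_val (n k : ℕ) (i : Fin n) :
    (stdPerm n k i : ℕ) = if (i : ℕ) < k then (i : ℕ) else n - 1 + k - i := by
  unfold stdPerm
  split_ifs <;> rfl

theorem not_hasBadQuad_rotSeq_stdPerm (n k : ℕ) (r : Fin n) :
    ¬ HasBadQuad (rotSeq (stdPerm n k) r) := by
  rintro ⟨a, p, q, t, hap, hpq, hqt, ha₁, ha₂, ha₃, hbad⟩
  simp only [rotSeq, IsBadTriple, Fin.lt_def, stdPerm_val, Fin.val_add_eq_ite] at *
  have := r.isLt
  have := t.isLt
  split_ifs at * <;> omega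

theorem risesThenFalls_stdPerm (n k : ℕ) : RisesThenFalls (stdPerm n k) k := by
  intro i j hij
  rw [Fin.lt_def] at hij
  split_ifs <;> simp only [Fin.lt_def, stdPerm_val] <;> split_ifs <;> omega

section Rotation

variable {n : ℕ}

theorem rotSeq_zero [NeZero n] (σ : Fin n → Fin n) : rotSeq σ 0 = σ := by
  funext i
  simp only [rotSeq, add_zero]

theorem rotSeq_rotSeq (σ : Fin n → Fin n) (r s : Fin n) :
    rotSeq (rotSeq σ r) s = rotSeq σ (s + r) := by
  funext i
  simp only [rotSeq, add_assoc]

theorem cycClass_rotSeq [NeZero n] (σ : Fin n → Fin n) (r : Fin n) :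
    CycClass (rotSeq σ r) = CycClass σ := by
  ext x
  constructor
  · rintro ⟨s, rfl⟩
    exact ⟨s + r, (rotSeq_rotSeq σ r s).symm⟩
  · rintro ⟨t, rfl⟩
    exact ⟨t - r, by rw [rotSeq_rotSeq, sub_add_cancel]⟩

end Rotation

theorem stdPerm_zero {n k : ℕ} [NeZero n] (hk : 0 < k) : stdPerm n k 0 = 0 :=
  dif_pos hk

theorem exists_cycClass_stdPerm_eq {n : ℕ} (hn : 2 ≤ n) (σ : Equiv.Perm (Fin n))
    (hσ : ∀ r, ¬ HasBadQuad (rotSeq σ r)) :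
    ∃ k ∈ Set.Icc 1 (n - 1), CycClass (stdPerm n k) = CycClass σ := by
  have : NeZero n := ⟨by omega⟩
  set τ := rotSeq σ (σ.symm 0)
  have hτ0 : τ 0 = 0 := by simp [τ, rotSeq]
  have hτ : Injective τ := σ.injective.comp (add_left_injective _)
  obtain ⟨M, hM⟩ := Finite.exists_max τ
  have hM0 : M ≠ 0 := by
    rintro rfl
    have h₁ : τ ⟨1, by omega⟩ = τ 0 := le_antisymm (hM _) (by rw [hτ0]; exact Fin.zero_le _)
    simpa [Fin.ext_iff] using hτ h₁
  refine ⟨M, ⟨Nat.one_le_iff_ne_zero.2 (Fin.val_ne_zero_iff.2 hM0), by omega⟩, ?_⟩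
  rw [← cycClass_rotSeq σ (σ.symm 0)]
  congr 1
  exact (risesThenFalls_stdPerm n M).eq
    (risesThenFalls_of_not_hasBadQuad hτ (by simp [hτ0]) hM (hσ _))

theorem cycClass_stdPerm_injOn (n : ℕ) [NeZero n] :
    Set.InjOn (fun k => CycClass (stdPerm n k)) (Set.Icc 1 (n - 1)) := by
  intro a ⟨ha₁, ha₂⟩ b ⟨hb₁, hb₂⟩ hab
  obtain ⟨r, hr⟩ : stdPerm n b ∈ CycClass (stdPerm n a) := by
    simp only at hab
    exact hab ▸ ⟨0, rotSeq_zero _⟩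
  have hr0 : r = 0 := by
    apply (risesThenFalls_stdPerm n a).injective
    have := congrFun hr 0
    simp only [rotSeq, zero_add] at this
    rw [this, stdPerm_zero hb₁, stdPerm_zero ha₁]
  subst hr0
  rw [rotSeq_zero] at hr
  have ha := risesThenFalls_stdPerm n a
  have hb := hr ▸ risesThenFalls_stdPerm n b
  have := NeZero.pos n
  exact le_antisymm (ha.index_le hb (by omega)) (hb.index_le ha (by omega))

theorem card_av_1324_1342_1423 (n : ℕ) (hn : 2 ≤ n) :
    (AvClasses n fun σ => CycAvoids σ ![1,3,2,4] ∧ CycAvoids σ ![1,3,4,2] ∧ CycAvoids σ ![1,4,2,3]).ncard = n - 1 := by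
  have : NeZero n := ⟨by omega⟩
  have hclasses : (AvClasses n fun σ =>
      CycAvoids σ ![1,3,2,4] ∧ CycAvoids σ ![1,3,4,2] ∧ CycAvoids σ ![1,4,2,3]) =
      (fun k => CycClass (stdPerm n k)) '' Set.Icc 1 (n - 1) := by
    ext C
    simp only [AvClasses, cycAvoids_iff_forall_not_hasBadQuad, Set.mem_ofPred_eq, Set.mem_image]
    constructor
    · rintro ⟨σ, rfl, hσ⟩
      exact exists_cycClass_stdPerm_eq hn σ hσ
    · rintro ⟨k, -, rfl⟩
      exact ⟨Equiv.ofBijective _ (Finite.injective_iff_bijective.1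
        (risesThenFalls_stdPerm n k).injective), rfl, not_hasBadQuad_rotSeq_stdPerm n k⟩
  rw [hclasses, (cycClass_stdPerm_injOn n).ncard_image, Set.ncard_Icc_nat]
  omega
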